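/- Let F : 𝕋 → ℝ be a C² function, θ̄ ∈ ℝ, and 0 < c < 1/2, and suppose ‖F − cos(·+θ̄)‖_{C²} ≤ c, where ‖G‖_{C²} := max_{0≤k≤2} sup_𝕋 |G^{(k)}|. Then F has exactly two critical points modulo 2π — one a strict global maximum and one a strict global minimum — and F is (1−2c)-Morse. -/
import Mathlib


open scoped Real
open Set


private lemma sign_neg_on_Ioo {g : ℝ → ℝ} (hg : Continuous g) {x y t0 : ℝ}
    (hne : ∀ t ∈ Ioo x y, g t ≠ 0) (ht0 : t0 ∈ Ioo x y) (hneg : g t0 < 0) :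
    ∀ t ∈ Ioo x y, g t < 0 := by
  intro t ht
  by_contra h
  push_neg at h
  have hpos : 0 < g t := lt_of_le_of_ne h fun e => hne t ht e.symm
  have h0 : (0:ℝ) ∈ Set.uIcc (g t0) (g t) := Set.mem_uIcc.mpr (Or.inl ⟨hneg.le, hpos.le⟩)
  obtain ⟨z, hz, hz0⟩ := intermediate_value_uIcc (f := g) hg.continuousOn h0
  exact hne z ((Set.ordConnected_Ioo.uIcc_subset ht0 ht) hz) hz0

private lemma sign_pos_on_Ioo {g : ℝ → ℝ} (hg : Continuous g) {x y t0 : ℝ}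
    (hne : ∀ t ∈ Ioo x y, g t ≠ 0) (ht0 : t0 ∈ Ioo x y) (hpos : 0 < g t0) :
    ∀ t ∈ Ioo x y, 0 < g t := by
  intro t ht
  have := sign_neg_on_Ioo (g := fun s => -g s) (hg.neg) (fun s hs e => hne s hs (by linarith [neg_eq_zero.mp e] )) ht0 (by simpa using hpos) t ht
  simpa using this

private lemma sin_ge_half {u : ℝ} (h1 : π/6 ≤ u) (h2 : u ≤ 5*π/6) : 1/2 ≤ Real.sin u := by
  have hπ := Real.pi_pos
  rcases le_total u (π/2) with h | h
  · have := Real.sin_le_sin_of_le_of_le_pi_div_two (x := π/6) (by linarith) h h1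
    rwa [Real.sin_pi_div_six] at this
  · rw [← Real.sin_pi_sub]
    have := Real.sin_le_sin_of_le_of_le_pi_div_two (x := π/6) (y := π - u) (by linarith) (by linarith) (by linarith)
    rwa [Real.sin_pi_div_six] at this

private lemma sqrt3_ge_one : (1:ℝ) ≤ Real.sqrt 3 := by
  rw [show (1:ℝ) = Real.sqrt 1 from Real.sqrt_one.symm]
  exact Real.sqrt_le_sqrt (by norm_num)

private lemma cos_ge_of_abs_le {v : ℝ} (h : |v| ≤ π/6) : Real.sqrt 3 / 2 ≤ Real.cos v := by
  have hπ := Real.pi_pos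
  rw [← Real.cos_abs, ← Real.cos_pi_div_six]
  exact Real.cos_le_cos_of_nonneg_of_le_pi (abs_nonneg v) (by linarith) h

private lemma cos_le_of_near_pi {u : ℝ} (h : |u - π| ≤ π/6) :
    Real.cos u ≤ -(Real.sqrt 3 / 2) := by
  have : Real.cos u = -Real.cos (π - u) := by
    rw [Real.cos_pi_sub]; ring
  rw [this]
  have h2 : |π - u| ≤ π/6 := by rwa [abs_sub_comm]
  have := cos_ge_of_abs_le h2
  linarith

private lemma sin_class {u : ℝ} (hl : -(π/6) ≤ u) (hr : u < 2*π - π/6)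
    (hs : |Real.sin u| < 1/2) :
    u ∈ Ioo (-(π/6)) (π/6) ∨ u ∈ Ioo (5*π/6) (7*π/6) := by
  have hπ := Real.pi_pos
  by_contra hcon
  push_neg at hcon
  rw [Set.mem_Ioo, Set.mem_Ioo] at hcon
  obtain ⟨hc1, hc2⟩ := hcon
  have key : 1/2 ≤ |Real.sin u| := by
    rcases lt_or_ge u (π/6) with h1 | h1
    · have he : u = -(π/6) := by
        rcases not_and_or.mp hc1 with h | h
        · push_neg at h; linarith
        · push_neg at h; linarith
      rw [he, Real.sin_neg, Real.sin_pi_div_six, abs_neg, abs_of_nonneg (by norm_num : (0:ℝ) ≤ 1/2)]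
    · rcases le_or_gt u (5*π/6) with h2 | h2
      · have := sin_ge_half h1 h2
        exact le_trans this (le_abs_self _)
      · rcases lt_or_ge u (7*π/6) with h3 | h3
        · exact absurd ⟨h2, h3⟩ hc2
        · -- u ∈ [7π/6, 11π/6): sin u = -sin(2π - u), 2π-u ∈ (π/6, 5π/6]
          have e : Real.sin u = -Real.sin (2*π - u) := by
            rw [Real.sin_two_pi_sub]; ring
          have hb : 1/2 ≤ Real.sin (2*π - u) := sin_ge_half (by linarith) (by linarith)
          rw [e]
          rw [abs_neg]
          exact le_trans hb (le_abs_self _)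
  linarith

private lemma no_multiple_in_Ioo {m : ℤ} (h1 : 0 < 2*π*(m:ℝ)) (h2 : 2*π*(m:ℝ) < 2*π) :
    False := by
  have hπ := Real.pi_pos
  have hm1 : 0 < (m:ℝ) := by nlinarith
  have hm2 : (m:ℝ) < 1 := by nlinarith
  have e1 : (0:ℤ) < m := by exact_mod_cast hm1
  have e2 : m < 1 := by exact_mod_cast hm2
  omega

private lemma no_multiple_in_Ioo' {m : ℤ} (h1 : -(2*π) < 2*π*(m:ℝ)) (h2 : 2*π*(m:ℝ) < 0) :
    False := by
  apply no_multiple_in_Ioo (m := -m) <;> push_cast <;> linarith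


/-- `F : 𝕋 → ℝ` (modeled as a `2π`-periodic function on `ℝ`) is `β`-Morse:
`min_θ (|F'(θ)| + |F''(θ)|) ≥ β` and any two critical points which are distinct modulo `2π`
have critical values at distance at least `β`. -/
def BetaMorse (β : ℝ) (F : ℝ → ℝ) : Prop :=
  (∀ θ, β ≤ |deriv F θ| + |deriv (deriv F) θ|) ∧
  (∀ θ₁ θ₂, deriv F θ₁ = 0 → deriv F θ₂ = 0 → (¬ ∃ m : ℤ, θ₁ = θ₂ + 2 * π * m) →
    β ≤ |F θ₁ - F θ₂|)

/-- If `F` is `C²`, `2π`-periodic and `‖F − cos(·+θ̄)‖_{C²} ≤ c` with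
`0 < c < 1/2`, then `F` has exactly two critical points modulo `2π` — a strict global maximum
and a strict global minimum — and `F` is `(1−2c)`-Morse. -/
theorem morse_of_close_to_cosine (F : ℝ → ℝ) (θb c : ℝ) (hc0 : 0 < c) (hc : c < 1 / 2)
    (hF : ContDiff ℝ 2 F) (hFper : ∀ θ, F (θ + 2 * π) = F θ)
    (h0 : ∀ θ, |F θ - Real.cos (θ + θb)| ≤ c)
    (h1 : ∀ θ, |deriv F θ + Real.sin (θ + θb)| ≤ c)
    (h2 : ∀ θ, |deriv (deriv F) θ + Real.cos (θ + θb)| ≤ c) :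
    ∃ θmax θmin : ℝ,
      deriv F θmax = 0 ∧ deriv F θmin = 0 ∧
      (¬ ∃ m : ℤ, θmax = θmin + 2 * π * m) ∧
      (∀ θ, deriv F θ = 0 →
        (∃ m : ℤ, θ = θmax + 2 * π * m) ∨ (∃ m : ℤ, θ = θmin + 2 * π * m)) ∧
      (∀ θ, (¬ ∃ m : ℤ, θ = θmax + 2 * π * m) → F θ < F θmax) ∧
      (∀ θ, (¬ ∃ m : ℤ, θ = θmin + 2 * π * m) → F θmin < F θ) ∧
      BetaMorse (1 - 2 * c) F := by
  have hπ := Real.pi_pos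
  have h2π := Real.two_pi_pos
  have hs3 := sqrt3_ge_one
  set a : ℝ := -θb with ha
  -- basic bounds
  have hg1 : ∀ θ, deriv F θ ≤ -Real.sin (θ + θb) + c ∧ -Real.sin (θ + θb) - c ≤ deriv F θ := by
    intro θ; have := abs_le.mp (h1 θ); constructor <;> linarith [this.1, this.2]
  have hg2 : ∀ θ, deriv (deriv F) θ ≤ -Real.cos (θ + θb) + c ∧
      -Real.cos (θ + θb) - c ≤ deriv (deriv F) θ := by
    intro θ; have := abs_le.mp (h2 θ); constructor <;> linarith [this.1, this.2]
  have hg0 : ∀ θ, F θ ≤ Real.cos (θ + θb) + c ∧ Real.cos (θ + θb) - c ≤ F θ := by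
    intro θ; have := abs_le.mp (h0 θ); constructor <;> linarith [this.1, this.2]
  have hFc : Continuous F := hF.continuous
  have hF'c : Continuous (deriv F) := hF.continuous_deriv one_le_two
  -- periodicity
  have hper : Function.Periodic F (2 * π) := hFper
  have hFeq : (fun x => F (x + 2 * π)) = F := funext hFper
  have hdper : Function.Periodic (deriv F) (2 * π) := by
    intro θ
    have h := deriv_comp_add_const (f := F) (a := 2 * π) (x := θ)
    rw [hFeq] at h
    exact h.symm
  have hFz : ∀ (θ : ℝ) (m : ℤ), F (θ + 2 * π * m) = F θ := by
    intro θ m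
    have := (hper.int_mul m) θ
    rw [show (m : ℝ) * (2 * π) = 2 * π * m by ring] at this
    exact this
  have hdz : ∀ (θ : ℝ) (m : ℤ), deriv F (θ + 2 * π * m) = deriv F θ := by
    intro θ m
    have := (hdper.int_mul m) θ
    rw [show (m : ℝ) * (2 * π) = 2 * π * m by ring] at this
    exact this
  -- shift identity
  have hsh : ∀ v : ℝ, (a + v) + θb = v := by intro v; rw [ha]; ring
  -- endpoint values for A
  have hA1 : 0 < deriv F (a - π/6) := by
    have h := (hg1 (a - π/6)).2
    rw [show (a - π/6) + θb = -(π/6) by rw [ha]; ring, Real.sin_neg, Real.sin_pi_div_six] at h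
    linarith
  have hA2 : deriv F (a + π/6) < 0 := by
    have h := (hg1 (a + π/6)).1
    rw [hsh (π/6), Real.sin_pi_div_six] at h
    linarith
  -- existence of a zero in A
  have hAsub : Set.Icc (deriv F (a + π/6)) (deriv F (a - π/6)) ⊆
      deriv F '' Set.Icc (a - π/6) (a + π/6) :=
    intermediate_value_Icc' (by linarith) hF'c.continuousOn
  obtain ⟨θmax, hθmaxIcc, hθmax0⟩ := hAsub ⟨hA2.le, hA1.le⟩
  -- strict antitonicity of deriv F on A
  have hAanti : StrictAntiOn (deriv F) (Set.Icc (a - π/6) (a + π/6)) := by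
    apply strictAntiOn_of_deriv_neg (convex_Icc _ _) hF'c.continuousOn
    intro x hx
    rw [interior_Icc] at hx
    have hcos : Real.sqrt 3 / 2 ≤ Real.cos (x + θb) := by
      apply cos_ge_of_abs_le
      rw [abs_le]
      obtain ⟨hx1, hx2⟩ := hx
      constructor <;> linarith [ha]
    have := (hg2 x).1
    linarith
  have hθmaxIoo : θmax ∈ Set.Ioo (a - π/6) (a + π/6) := by
    rcases hθmaxIcc.1.lt_or_eq with h | h
    · rcases hθmaxIcc.2.lt_or_eq with h' | h'
      · exact ⟨h, h'⟩
      · exact absurd (h' ▸ hθmax0) hA2.ne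
    · exact absurd (h ▸ hθmax0) hA1.ne'
  have hAuniq : ∀ t ∈ Set.Icc (a - π/6) (a + π/6), deriv F t = 0 → t = θmax := by
    intro t ht h0t
    rcases lt_trichotomy t θmax with h | h | h
    · have := hAanti ht hθmaxIcc h; rw [h0t, hθmax0] at this; exact absurd this (lt_irrefl _)
    · exact h
    · have := hAanti hθmaxIcc ht h; rw [h0t, hθmax0] at this; exact absurd this (lt_irrefl _)
  -- endpoint values for B
  have hB1 : deriv F (a + 5*π/6) < 0 := by
    have h := (hg1 (a + 5*π/6)).1
    rw [hsh (5*π/6)] at h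
    have hsin : Real.sin (5*π/6) = 1/2 := by
      rw [show 5*π/6 = π - π/6 by ring, Real.sin_pi_sub, Real.sin_pi_div_six]
    rw [hsin] at h
    linarith
  have hB2 : 0 < deriv F (a + 7*π/6) := by
    have h := (hg1 (a + 7*π/6)).2
    rw [hsh (7*π/6)] at h
    have hsin : Real.sin (7*π/6) = -(1/2) := by
      rw [show 7*π/6 = π/6 + π by ring, Real.sin_add_pi, Real.sin_pi_div_six]
    rw [hsin] at h
    linarith
  have hBsub : Set.Icc (deriv F (a + 5*π/6)) (deriv F (a + 7*π/6)) ⊆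
      deriv F '' Set.Icc (a + 5*π/6) (a + 7*π/6) :=
    intermediate_value_Icc (by linarith) hF'c.continuousOn
  obtain ⟨θmin, hθminIcc, hθmin0⟩ := hBsub ⟨hB1.le, hB2.le⟩
  have hBmono : StrictMonoOn (deriv F) (Set.Icc (a + 5*π/6) (a + 7*π/6)) := by
    apply strictMonoOn_of_deriv_pos (convex_Icc _ _) hF'c.continuousOn
    intro x hx
    rw [interior_Icc] at hx
    have hcos : Real.cos (x + θb) ≤ -(Real.sqrt 3 / 2) := by
      apply cos_le_of_near_pi
      rw [abs_le]
      obtain ⟨hx1, hx2⟩ := hx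
      constructor <;> linarith [ha]
    have := (hg2 x).2
    linarith
  have hθminIoo : θmin ∈ Set.Ioo (a + 5*π/6) (a + 7*π/6) := by
    rcases hθminIcc.1.lt_or_eq with h | h
    · rcases hθminIcc.2.lt_or_eq with h' | h'
      · exact ⟨h, h'⟩
      · exact absurd (h' ▸ hθmin0) hB2.ne'
    · exact absurd (h ▸ hθmin0) hB1.ne
  have hBuniq : ∀ t ∈ Set.Icc (a + 5*π/6) (a + 7*π/6), deriv F t = 0 → t = θmin := by
    intro t ht h0t
    rcases lt_trichotomy t θmin with h | h | h
    · have := hBmono ht hθminIcc h; rw [h0t, hθmin0] at this; exact absurd this (lt_irrefl _)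
    · exact h
    · have := hBmono hθminIcc ht h; rw [h0t, hθmin0] at this; exact absurd this (lt_irrefl _)
  -- classification of critical points
  have hclass : ∀ θ, deriv F θ = 0 →
      (∃ m : ℤ, θ = θmax + 2 * π * m) ∨ (∃ m : ℤ, θ = θmin + 2 * π * m) := by
    intro θ hθ
    set m : ℤ := toIcoDiv h2π (a - π/6) θ with hm
    set θ' : ℝ := toIcoMod h2π (a - π/6) θ with hθ'
    have hmem : θ' ∈ Set.Ico (a - π/6) ((a - π/6) + 2 * π) := toIcoMod_mem_Ico h2π _ _
    have hrep : θ = θ' + 2 * π * m := by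
      rw [hθ', toIcoMod, hm]
      push_cast [zsmul_eq_mul]
      ring
    have hd0 : deriv F θ' = 0 := by
      rw [← hθ, hrep, hdz]
    have hsin : |Real.sin (θ' + θb)| < 1/2 := by
      have := h1 θ'
      rw [hd0, zero_add] at this
      linarith
    have hcls := sin_class (u := θ' + θb)
      (by obtain ⟨hl, _⟩ := hmem; linarith [ha])
      (by obtain ⟨_, hr⟩ := hmem; linarith [ha]) hsin
    rcases hcls with hI | hI
    · left
      refine ⟨m, ?_⟩
      have : θ' = θmax := by
        apply hAuniq θ' ?_ hd0
        obtain ⟨hx1, hx2⟩ := hI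
        constructor <;> linarith [ha]
      rw [hrep, this]
    · right
      refine ⟨m, ?_⟩
      have : θ' = θmin := by
        apply hBuniq θ' ?_ hd0
        obtain ⟨hx1, hx2⟩ := hI
        constructor <;> linarith [ha]
      rw [hrep, this]
  -- θmax and θmin inequivalent
  have hineq : ¬ ∃ m : ℤ, θmax = θmin + 2 * π * m := by
    rintro ⟨m, hm⟩
    obtain ⟨hM1, hM2⟩ := hθmaxIoo
    obtain ⟨hN1, hN2⟩ := hθminIoo
    exact no_multiple_in_Ioo' (m := m) (by linarith) (by linarith)
  -- ordering
  have hord1 : θmax < θmin := by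
    obtain ⟨hM1, hM2⟩ := hθmaxIoo; obtain ⟨hN1, hN2⟩ := hθminIoo; linarith
  have hord2 : θmin < θmax + 2*π := by
    obtain ⟨hM1, hM2⟩ := hθmaxIoo; obtain ⟨hN1, hN2⟩ := hθminIoo; linarith
  -- derivative negative on (θmax, θmin)
  have hneg : ∀ t ∈ Set.Ioo θmax θmin, deriv F t < 0 := by
    apply sign_neg_on_Ioo hF'c (t0 := a + π/2)
    · intro t ht h0t
      rcases hclass t h0t with ⟨m, hm⟩ | ⟨m, hm⟩
      · obtain ⟨ht1, ht2⟩ := ht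
        rw [hm] at ht1 ht2
        exact no_multiple_in_Ioo (m := m) (by linarith) (by linarith)
      · obtain ⟨ht1, ht2⟩ := ht
        rw [hm] at ht1 ht2
        exact no_multiple_in_Ioo' (m := m) (by linarith) (by linarith)
    · constructor
      · obtain ⟨_, hM2⟩ := hθmaxIoo; linarith
      · obtain ⟨hN1, _⟩ := hθminIoo; linarith
    · have h := (hg1 (a + π/2)).1
      rw [hsh (π/2), Real.sin_pi_div_two] at h
      linarith
  -- derivative positive on (θmin, θmax + 2π)
  have hpos : ∀ t ∈ Set.Ioo θmin (θmax + 2*π), 0 < deriv F t := by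
    apply sign_pos_on_Ioo hF'c (t0 := a + 3*π/2)
    · intro t ht h0t
      rcases hclass t h0t with ⟨m, hm⟩ | ⟨m, hm⟩
      · obtain ⟨ht1, ht2⟩ := ht
        rw [hm] at ht1 ht2
        exact no_multiple_in_Ioo (m := m) (by linarith) (by linarith)
      · obtain ⟨ht1, ht2⟩ := ht
        rw [hm] at ht1 ht2
        exact no_multiple_in_Ioo (m := m) (by linarith) (by linarith)
    · constructor
      · obtain ⟨_, hN2⟩ := hθminIoo; linarith
      · obtain ⟨hM1, _⟩ := hθmaxIoo; linarith
    · have h := (hg1 (a + 3*π/2)).2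
      rw [hsh (3*π/2)] at h
      have hsin : Real.sin (3*π/2) = -1 := by
        rw [show 3*π/2 = π/2 + π by ring, Real.sin_add_pi, Real.sin_pi_div_two]
      rw [hsin] at h
      linarith
  -- monotonicity of F
  have hFanti : StrictAntiOn F (Set.Icc θmax θmin) := by
    apply strictAntiOn_of_deriv_neg (convex_Icc _ _) hFc.continuousOn
    intro x hx; rw [interior_Icc] at hx; exact hneg x hx
  have hFmono : StrictMonoOn F (Set.Icc θmin (θmax + 2*π)) := by
    apply strictMonoOn_of_deriv_pos (convex_Icc _ _) hFc.continuousOn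
    intro x hx; rw [interior_Icc] at hx; exact hpos x hx
  -- reduction to window
  have hred : ∀ θ : ℝ, ∃ (m : ℤ) (θ' : ℝ), θ = θ' + 2 * π * m ∧
      θ' ∈ Set.Ico θmax (θmax + 2*π) ∧ F θ = F θ' := by
    intro θ
    have hrepeq : θ = toIcoMod h2π θmax θ + 2 * π * (toIcoDiv h2π θmax θ : ℝ) := by
      rw [toIcoMod]; push_cast [zsmul_eq_mul]; ring
    refine ⟨toIcoDiv h2π θmax θ, toIcoMod h2π θmax θ, hrepeq, toIcoMod_mem_Ico h2π _ _, ?_⟩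
    conv_lhs => rw [hrepeq]
    exact hFz _ _
  -- strict max
  have hmax : ∀ θ, (¬ ∃ m : ℤ, θ = θmax + 2 * π * m) → F θ < F θmax := by
    intro θ hθ
    obtain ⟨m, θ', hrep, hmem, hFθ⟩ := hred θ
    have hne : θ' ≠ θmax := by
      intro e; exact hθ ⟨m, by rw [hrep, e]⟩
    have hlt : θmax < θ' := lt_of_le_of_ne hmem.1 (Ne.symm hne)
    rw [hFθ]
    rcases le_or_gt θ' θmin with h | h
    · exact hFanti ⟨le_rfl, hord1.le⟩ ⟨hlt.le, h⟩ hlt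
    · have := hFmono ⟨h.le, hmem.2.le⟩ ⟨hord2.le, le_rfl⟩ hmem.2
      rw [hFper θmax] at this
      exact this
  -- strict min
  have hmin : ∀ θ, (¬ ∃ m : ℤ, θ = θmin + 2 * π * m) → F θmin < F θ := by
    intro θ hθ
    obtain ⟨m, θ', hrep, hmem, hFθ⟩ := hred θ
    have hne : θ' ≠ θmin := by
      intro e; exact hθ ⟨m, by rw [hrep, e]⟩
    rw [hFθ]
    rcases lt_or_lt_iff_ne.mpr hne with h | h
    · exact hFanti ⟨hmem.1, h.le⟩ ⟨hord1.le, le_rfl⟩ h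
    · exact hFmono ⟨le_rfl, hord2.le⟩ ⟨h.le, hmem.2.le⟩ h
  -- value bounds at θmax, θmin
  have hvmax : Real.sqrt 3 / 2 - c ≤ F θmax := by
    have h := (hg0 θmax).2
    have hcos : Real.sqrt 3 / 2 ≤ Real.cos (θmax + θb) := by
      apply cos_ge_of_abs_le
      rw [abs_le]
      obtain ⟨hx1, hx2⟩ := hθmaxIoo
      constructor <;> linarith [ha]
    linarith
  have hvmin : F θmin ≤ -(Real.sqrt 3 / 2) + c := by
    have h := (hg0 θmin).1
    have hcos : Real.cos (θmin + θb) ≤ -(Real.sqrt 3 / 2) := by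
      apply cos_le_of_near_pi
      rw [abs_le]
      obtain ⟨hx1, hx2⟩ := hθminIoo
      constructor <;> linarith [ha]
    linarith
  refine ⟨θmax, θmin, hθmax0, hθmin0, hineq, hclass, hmax, hmin, ?_, ?_⟩
  · -- first Morse condition
    intro θ
    set u := θ + θb with hu
    have t1 : |Real.sin u| - c ≤ |deriv F θ| := by
      have h := abs_add_le (deriv F θ + Real.sin u) (-(deriv F θ))
      rw [abs_neg, show deriv F θ + Real.sin u + -(deriv F θ) = Real.sin u by ring] at h
      linarith [h1 θ]
    have t2 : |Real.cos u| - c ≤ |deriv (deriv F) θ| := by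
      have h := abs_add_le (deriv (deriv F) θ + Real.cos u) (-(deriv (deriv F) θ))
      rw [abs_neg, show deriv (deriv F) θ + Real.cos u + -(deriv (deriv F) θ) = Real.cos u by ring] at h
      linarith [h2 θ]
    have hpyth := Real.sin_sq_add_cos_sq u
    have hs1 : |Real.sin u| ≤ 1 := abs_le.mpr ⟨Real.neg_one_le_sin u, Real.sin_le_one u⟩
    have hc1 : |Real.cos u| ≤ 1 := abs_le.mpr ⟨Real.neg_one_le_cos u, Real.cos_le_one u⟩
    have h1s : Real.sin u ^ 2 ≤ |Real.sin u| := by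
      nlinarith [sq_abs (Real.sin u), abs_nonneg (Real.sin u)]
    have h1c : Real.cos u ^ 2 ≤ |Real.cos u| := by
      nlinarith [sq_abs (Real.cos u), abs_nonneg (Real.cos u)]
    linarith
  · -- second Morse condition
    intro θ₁ θ₂ hz1 hz2 hne
    have hgap : 1 - 2*c ≤ F θmax - F θmin := by
      have : (1:ℝ) ≤ Real.sqrt 3 := hs3
      linarith
    rcases hclass θ₁ hz1 with ⟨m₁, hm₁⟩ | ⟨m₁, hm₁⟩ <;>
      rcases hclass θ₂ hz2 with ⟨m₂, hm₂⟩ | ⟨m₂, hm₂⟩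
    · exact absurd ⟨m₁ - m₂, by push_cast; rw [hm₁, hm₂]; ring⟩ hne
    · have e1 : F θ₁ = F θmax := by rw [hm₁, hFz]
      have e2 : F θ₂ = F θmin := by rw [hm₂, hFz]
      rw [e1, e2]
      calc 1 - 2*c ≤ F θmax - F θmin := hgap
        _ ≤ |F θmax - F θmin| := le_abs_self _
    · have e1 : F θ₁ = F θmin := by rw [hm₁, hFz]
      have e2 : F θ₂ = F θmax := by rw [hm₂, hFz]
      rw [e1, e2, abs_sub_comm]
      calc 1 - 2*c ≤ F θmax - F θmin := hgap
        _ ≤ |F θmax - F θmin| := le_abs_self _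
    · exact absurd ⟨m₁ - m₂, by push_cast; rw [hm₁, hm₂]; ring⟩ hne
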